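/- Let X be a Banach space and f : 𝕊 → X an analytic function on the strip 𝕊 = {z ∈ ℂ : 0 < Re z < 1} which is 2π-periodic in the imaginary direction, i.e. f(z + 2πi) = f(z) for all z ∈ 𝕊. Define the Fourier coefficients f̂_z(k) = (1/2π) ∫₀^{2π} f(z + it) e^{-ikt} dt for z ∈ 𝕊 and k ∈ ℤ. Then for each k ∈ ℤ, the quantity e^{-kz} f̂_z(k) is independent of z ∈ 𝕊. -/
import Mathlib

open Complex Real in
/-- For a 2π-periodic holomorphic function f on the strip 𝕊 = {0 < Re z < 1} with
values in a complex Banach space, the quantity e^{-kz} f̂_z(k) does not depend on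
z ∈ 𝕊, where f̂_z(k) = (1/2π) ∫₀^{2π} f(z + it) e^{-ikt} dt. -/
theorem stmt6 (X : Type*) [NormedAddCommGroup X] [NormedSpace ℂ X] [CompleteSpace X]
    (S : Set ℂ) (hS : S = {z : ℂ | 0 < z.re ∧ z.re < 1})
    (f : ℂ → X) (hf : DifferentiableOn ℂ f S)
    (hper : ∀ z ∈ S, f (z + 2 * π * I) = f z)
    (F : ℂ → ℤ → X)
    (hF : ∀ z ∈ S, ∀ k : ℤ, F z k =
      (2 * π : ℂ)⁻¹ • ∫ t in (0 : ℝ)..(2 * π), Complex.exp (-(k : ℂ) * I * t) • f (z + t * I)) :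
    ∀ k : ℤ, ∀ z ∈ S, ∀ w ∈ S,
      Complex.exp (-(k : ℂ) * z) • F z k = Complex.exp (-(k : ℂ) * w) • F w k := by
  subst hS
  intro k z hz w hw
  obtain ⟨hz1, hz2⟩ := hz
  obtain ⟨hw1, hw2⟩ := hw
  set S : Set ℂ := {z : ℂ | 0 < z.re ∧ z.re < 1} with hS
  have hz : z ∈ S := ⟨hz1, hz2⟩
  have hw : w ∈ S := ⟨hw1, hw2⟩
  set G : ℂ → X := fun u => Complex.exp (-(k : ℂ) * u) • f u with hG
  have hGd : DifferentiableOn ℂ G S := by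
    apply DifferentiableOn.smul _ hf
    exact (Complex.differentiable_exp.comp ((differentiable_id.const_mul _))).differentiableOn
  have hexp1 : Complex.exp (-(k : ℂ) * (2 * π * I)) = 1 := by
    have := Complex.exp_int_mul_two_pi_mul_I (-k)
    push_cast at this ⊢
    convert this using 2
  have hGper : ∀ u ∈ S, G (u + 2 * π * I) = G u := by
    intro u hu
    simp only [hG]
    rw [hper u hu, mul_add, Complex.exp_add, hexp1, mul_one]
  -- Step A
  have stepA : ∀ u ∈ S, Complex.exp (-(k : ℂ) * u) • F u k
      = (2 * π : ℂ)⁻¹ • ∫ t in (0:ℝ)..(2*π), G (u + t * I) := by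
    intro u hu
    rw [hF u hu k, smul_comm, ← intervalIntegral.integral_smul]
    congr 1
    apply intervalIntegral.integral_congr
    intro t _
    simp only [hG, smul_smul, ← Complex.exp_add]
    congr 2
    ring
  -- Step B
  have stepB : ∀ u ∈ S, (∫ t in (0:ℝ)..(2*π), G (u + t * I))
      = ∫ t in (0:ℝ)..(2*π), G (u.re + t * I) := by
    intro u hu
    have hmem : ∀ s : ℝ, ((u.re : ℂ) + s * I) ∈ S := by
      intro s
      refine ⟨?_, ?_⟩
      · simpa using hu.1
      · simpa using hu.2
    have hper' : Function.Periodic (fun s : ℝ => G ((u.re : ℂ) + s * I)) (2*π) := by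
      intro s
      have h := hGper ((u.re : ℂ) + s * I) (hmem s)
      simp only []
      rw [← h]
      congr 1
      push_cast
      ring
    set g : ℝ → X := fun s : ℝ => G ((u.re : ℂ) + s * I) with hg
    calc (∫ t in (0:ℝ)..(2*π), G (u + t * I))
        = ∫ t in (0:ℝ)..(2*π), g (t + u.im) := by
          apply intervalIntegral.integral_congr
          intro t _
          simp only [hg]
          congr 1
          nth_rewrite 1 [← Complex.re_add_im u]
          push_cast
          ring
      _ = ∫ s in (0+u.im)..(2*π+u.im), g s :=
          intervalIntegral.integral_comp_add_right g u.im
      _ = ∫ s in u.im..(u.im + 2*π), g s := by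
          rw [zero_add, add_comm (2*π) u.im]
      _ = ∫ s in (0:ℝ)..(0 + 2*π), g s :=
          hper'.intervalIntegral_add_eq u.im 0
      _ = ∫ t in (0:ℝ)..(2*π), g t := by rw [zero_add]
  -- Step C : rectangle
  have stepC : (∫ t in (0:ℝ)..(2*π), G ((z.re : ℂ) + t * I))
      = ∫ t in (0:ℝ)..(2*π), G ((w.re : ℂ) + t * I) := by
    set a : ℂ := (z.re : ℂ) with ha
    set b : ℂ := (w.re : ℂ) + 2*π*I with hb
    have hare : a.re = z.re := by simp [ha]
    have haim : a.im = 0 := by simp [ha]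
    have hbre : b.re = w.re := by simp [hb]
    have hbim : b.im = 2*π := by simp [hb]
    have hrect : Set.uIcc a.re b.re ×ℂ Set.uIcc a.im b.im ⊆ S := by
      intro p hp
      rw [Complex.mem_reProdIm] at hp
      have h1 := hp.1
      rw [hare, hbre, Set.mem_uIcc] at h1
      refine ⟨?_, ?_⟩ <;> rcases h1 with ⟨h1a, h1b⟩ | ⟨h1a, h1b⟩ <;> linarith
    have h0 := Complex.integral_boundary_rect_eq_zero_of_differentiableOn G a b (hGd.mono hrect)
    rw [hare, hbre, haim, hbim] at h0
    have hside : (∫ x : ℝ in z.re..w.re, G ((x:ℂ) + (0:ℝ) * I))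
        = ∫ x : ℝ in z.re..w.re, G ((x:ℂ) + ((2*π : ℝ):ℂ) * I) := by
      apply intervalIntegral.integral_congr
      intro x hx
      rw [Set.mem_uIcc] at hx
      have hxS : ((x:ℂ) + ((0:ℝ):ℂ) * I) ∈ S := by
        refine ⟨?_, ?_⟩ <;> simp <;>
          rcases hx with ⟨h1a, h1b⟩ | ⟨h1a, h1b⟩ <;> linarith
      have h := hGper _ hxS
      show G ((x:ℂ) + ((0:ℝ):ℂ) * I) = G ((x:ℂ) + ((2*π:ℝ):ℂ) * I)
      rw [← h]
      congr 1
      push_cast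
      ring
    rw [hside] at h0
    have h0' : I • (∫ y : ℝ in (0:ℝ)..(2*π), G ((w.re:ℂ) + y * I))
        = I • ∫ y : ℝ in (0:ℝ)..(2*π), G ((z.re:ℂ) + y * I) := by
      have : (∫ x : ℝ in z.re..w.re, G ((x:ℂ) + ((2*π:ℝ):ℂ) * I))
          - (∫ x : ℝ in z.re..w.re, G ((x:ℂ) + ((2*π:ℝ):ℂ) * I))
          + I • (∫ y : ℝ in (0:ℝ)..(2*π), G ((w.re:ℂ) + y * I))
          - I • (∫ y : ℝ in (0:ℝ)..(2*π), G ((z.re:ℂ) + y * I)) = 0 := by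
        convert h0 using 4
      rw [sub_self, zero_add, sub_eq_zero] at this
      exact this
    exact (smul_right_injective X Complex.I_ne_zero h0').symm
  rw [stepA z hz, stepA w hw, stepB z hz, stepB w hw, stepC]
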